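/- (Corollary 1) For real numbers μ1 < μ2, σ > 0, an integer d ≥ 1, and every h ∈ [0, 1]: ε(h) > ε_raw if and only if |2h−1| < 1/√d; consequently, for every h with |2h−1| < 1/√d one has min (ε h) ε_raw = ε_raw < ε(h), so on this homophily range classifying with the ego-node features (error ε_raw) depresses the misclassification rate below that of the aggregated neighborhood features. -/

import Mathlib

/-!
Since the Gaussian has a positive density, `Φ` is strictly increasing, so `ε(h) > ε_raw`
compares the arguments of `Φ`: `|2h−1|·√d·(μ2−μ1)/(2σ) < (μ2−μ1)/(2σ)`, i.e. `|2h−1|·√d < 1`.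
-/

open MeasureTheory ProbabilityTheory
open scoped NNReal

/-- The standard normal CDF `Φ`. -/
noncomputable def stdNormalCDF (x : ℝ) : ℝ := ((gaussianReal 0 1) (Set.Iic x)).toReal

/-- The aggregated misclassification rate at homophily `h`, for class means `μ1, μ2`,
class standard deviation `σ`, and degree `d`:
`ε(h) = 2·Φ(−|2h−1|·√d·(μ2−μ1)/(2σ))`. -/
noncomputable def aggErr (μ1 μ2 σ : ℝ) (d : ℕ) (h : ℝ) : ℝ :=
  2 * stdNormalCDF (-(|2 * h - 1| * Real.sqrt d * (μ2 - μ1)) / (2 * σ))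

/-- The raw misclassification rate `ε_raw = 2·Φ(−(μ2−μ1)/(2σ))`. -/
noncomputable def rawErr (μ1 μ2 σ : ℝ) : ℝ :=
  2 * stdNormalCDF (-(μ2 - μ1) / (2 * σ))

open Set

theorem measureReal_Iic_strictMono {X : Type*} [TopologicalSpace X] [LinearOrder X]
    [OrderTopology X] [DenselyOrdered X] [MeasurableSpace X] [OpensMeasurableSpace X]
    (μ : Measure X) [IsFiniteMeasure μ] [μ.IsOpenPosMeasure] :
    StrictMono fun x ↦ μ.real (Iic x) := by
  intro x y hxy
  have hpos : 0 < μ.real (Ioc x y) :=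
    ENNReal.toReal_pos
      ((μ.measure_Ioo_pos.mpr hxy).trans_le (measure_mono Ioo_subset_Ioc_self)).ne'
      (measure_ne_top _ _)
  calc μ.real (Iic x) < μ.real (Iic x) + μ.real (Ioc x y) := lt_add_of_pos_right _ hpos
    _ = μ.real (Iic y) := by
      rw [← measureReal_union (Iic_disjoint_Ioc le_rfl) measurableSet_Ioc,
        Iic_union_Ioc_eq_Iic hxy.le]

theorem stdNormalCDF_strictMono : StrictMono stdNormalCDF := by
  have := (gaussianReal_absolutelyContinuous' 0 (v := 1) one_ne_zero).isOpenPosMeasure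
  exact measureReal_Iic_strictMono (gaussianReal 0 1)

theorem rawErr_lt_aggErr_iff {μ1 μ2 σ : ℝ} (hμ : μ1 < μ2) (hσ : 0 < σ) (d : ℕ) (h : ℝ) :
    rawErr μ1 μ2 σ < aggErr μ1 μ2 σ d h ↔ |2 * h - 1| * Real.sqrt d < 1 := by
  rw [rawErr, aggErr, mul_lt_mul_iff_right₀ two_pos, stdNormalCDF_strictMono.lt_iff_lt,
    div_lt_div_iff_of_pos_right (by positivity), neg_lt_neg_iff,
    mul_lt_iff_lt_one_left (sub_pos.mpr hμ)]

/-- (Corollary 1) For `h ∈ [0,1]`, the aggregated misclassification rate exceeds the raw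
one iff `|2h−1| < 1/√d`; consequently, on this homophily range combining in the ego-node
features (error `ε_raw`) depresses the misclassification rate:
`min (ε h) ε_raw = ε_raw < ε h`. -/
theorem aggErr_gt_rawErr_iff (μ1 μ2 σ : ℝ) (h : μ1 < μ2) (hσ : 0 < σ)
    (d : ℕ) (hd : 1 ≤ d) :
    (∀ h' ∈ Set.Icc (0 : ℝ) 1,
      aggErr μ1 μ2 σ d h' > rawErr μ1 μ2 σ ↔ |2 * h' - 1| < 1 / Real.sqrt d) ∧
    (∀ h' : ℝ, |2 * h' - 1| < 1 / Real.sqrt d →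
      min (aggErr μ1 μ2 σ d h') (rawErr μ1 μ2 σ) = rawErr μ1 μ2 σ ∧
      rawErr μ1 μ2 σ < aggErr μ1 μ2 σ d h') := by
  have hsqrt : 0 < Real.sqrt d := Real.sqrt_pos.mpr (Nat.cast_pos.mpr hd)
  have key (h' : ℝ) :
      rawErr μ1 μ2 σ < aggErr μ1 μ2 σ d h' ↔ |2 * h' - 1| < 1 / Real.sqrt d := by
    rw [rawErr_lt_aggErr_iff h hσ, lt_div_iff₀ hsqrt]
  exact ⟨fun h' _ ↦ key h', fun h' hh' ↦ ⟨min_eq_right ((key h').2 hh').le, (key h').2 hh'⟩⟩
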